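/- arXiv:1611.01428 — 4 statements merged into one kernel-verified Lean document; each statement's English description precedes it below -/
import Mathlib

section
/- Let Λ ⊂ ℂ^k be a lattice, c ∈ ℂ^k, and let X₁ be sampled from the discrete Gaussian D_{Λ+c,√Σ₁} and X₂ independently from the continuous complex Gaussian density f_{√Σ₂}. Set Σ₀ = Σ₁+Σ₂ and define Σ by Σ⁻¹ = Σ₁⁻¹+Σ₂⁻¹. If the flatness factor satisfies ε_Λ(√Σ) ≤ ε ≤ 1/2, then the L¹ distance between the density g of X = X₁+X₂ and the Gaussian density f_{√Σ₀} satisfies 𝕍(g, f_{√Σ₀}) ≤ 4ε. -/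
open Matrix MeasureTheory
open scoped Real ComplexOrder

/-- The circularly symmetric complex Gaussian density
`f_{√Σ}(z) = (π^k det Σ)⁻¹ e^{-z†Σ⁻¹z}` on `ℂ^k`. -/
noncomputable def complexGaussian {k : ℕ} (S : Matrix (Fin k) (Fin k) ℂ)
    (z : Fin k → ℂ) : ℝ :=
  (π ^ k * S.det.re)⁻¹ * Real.exp (-(star z ⬝ᵥ S⁻¹.mulVec z).re)

/-!
Completing the square gives `f_{√Σ₁}(y) f_{√Σ₂}(x - y) = f_{√Σ₀}(x) f_{√Σ}(m(x) - y)` with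
`m(x) = Σ Σ₂⁻¹ x`. Hence the mixture density is `g(x) = f_{√Σ₀}(x) θ(m(x) - c) / Z`, where
`θ(z) = ∑_λ f_{√Σ}(z - λ)` and `Z = ∑_λ f_{√Σ₁}(λ + c)`, and integrating the same identity in `x`
gives `Z = ∫ f_{√Σ₀}(x) θ(m(x) - c) dx`. Flatness puts `θ`, and therefore `Z`, in
`[(1 - ε)/V, (1 + ε)/V]`, so `|g - f_{√Σ₀}| ≤ 2ε/(1 - ε) · f_{√Σ₀} ≤ 4ε f_{√Σ₀}` pointwise.
-/

section Mixture

variable {X ι : Type*} [MeasurableSpace X] {μ : Measure X} [Countable ι]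
  {ρ : X → ℝ} {θ : ι → X → ℝ} {a b : ℝ}

theorem tsum_integral_mul_mem_Icc (hρ : 0 ≤ ρ) (hρ1 : ∫ x, ρ x ∂μ = 1) (hθ : ∀ i, 0 ≤ θ i)
    (hθm : ∀ i, AEStronglyMeasurable (θ i) μ) (hsum : ∀ x, Summable (θ · x))
    (hbd : ∀ x, ∑' i, θ i x ∈ Set.Icc a b) (ha : 0 < a) :
    ∑' i, ∫ x, ρ x * θ i x ∂μ ∈ Set.Icc a b := by
  have hρi : Integrable ρ μ := .of_integral_ne_zero (by simp [hρ1])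
  have hF : ∀ i, Integrable (fun x => ρ x * θ i x) μ := fun i =>
    (hρi.mul_const b).mono' (hρi.aestronglyMeasurable.mul (hθm i)) <| ae_of_all _ fun x => by
      rw [Real.norm_of_nonneg (mul_nonneg (hρ x) (hθ i x))]
      exact mul_le_mul_of_nonneg_left
        (((hsum x).le_tsum i fun j _ => hθ j x).trans (hbd x).2) (hρ x)
  have hF0 : ∀ i, 0 ≤ᵐ[μ] fun x => ρ x * θ i x := fun i =>
    ae_of_all _ fun x => mul_nonneg (hρ x) (hθ i x)
  have hlρ : ∫⁻ x, ENNReal.ofReal (ρ x) ∂μ = 1 := by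
    rw [← ofReal_integral_eq_lintegral_ofReal hρi (ae_of_all _ hρ), hρ1, ENNReal.ofReal_one]
  -- Tonelli in `ℝ≥0∞`, which needs no a priori summability of the weights.
  have hswap : ∑' i, ENNReal.ofReal (∫ x, ρ x * θ i x ∂μ) =
      ∫⁻ x, ENNReal.ofReal (ρ x) * ENNReal.ofReal (∑' i, θ i x) ∂μ := by
    simp_rw [fun i => ofReal_integral_eq_lintegral_ofReal (hF i) (hF0 i)]
    rw [← lintegral_tsum fun i => (hF i).aemeasurable.ennreal_ofReal]
    refine lintegral_congr fun x => ?_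
    simp_rw [ENNReal.ofReal_mul (hρ x), ENNReal.tsum_mul_left,
      ENNReal.ofReal_tsum_of_nonneg (fun i => hθ i x) (hsum x)]
  have hlo : ENNReal.ofReal a ≤ ∑' i, ENNReal.ofReal (∫ x, ρ x * θ i x ∂μ) := by
    rw [hswap, ← one_mul (ENNReal.ofReal a), ← hlρ,
      ← lintegral_mul_const' _ _ ENNReal.ofReal_ne_top]
    exact lintegral_mono fun x => by gcongr; exact (hbd x).1
  have hup : ∑' i, ENNReal.ofReal (∫ x, ρ x * θ i x ∂μ) ≤ ENNReal.ofReal b := by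
    rw [hswap, ← one_mul (ENNReal.ofReal b), ← hlρ,
      ← lintegral_mul_const' _ _ ENNReal.ofReal_ne_top]
    exact lintegral_mono fun x => by gcongr; exact (hbd x).2
  have hw0 : ∀ i, 0 ≤ ∫ x, ρ x * θ i x ∂μ := fun i => integral_nonneg_of_ae (hF0 i)
  have hwsum : Summable fun i => ∫ x, ρ x * θ i x ∂μ :=
    (ENNReal.summable_toReal (hup.trans_lt ENNReal.ofReal_lt_top).ne).congr fun i =>
      ENNReal.toReal_ofReal (hw0 i)
  rw [← ENNReal.ofReal_tsum_of_nonneg hw0 hwsum] at hlo hup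
  have hZ := (ENNReal.ofReal_le_ofReal_iff (tsum_nonneg hw0)).1 hlo
  exact ⟨hZ, (ENNReal.ofReal_le_ofReal_iff'.1 hup).resolve_right (by linarith)⟩

theorem integral_abs_tsum_div_sub_le (hρ : 0 ≤ ρ) (hρ1 : ∫ x, ρ x ∂μ = 1) (hθ : ∀ i, 0 ≤ θ i)
    (hθm : ∀ i, AEStronglyMeasurable (θ i) μ) (hsum : ∀ x, Summable (θ · x))
    (hbd : ∀ x, ∑' i, θ i x ∈ Set.Icc a b) (ha : 0 < a) {g : X → ℝ}
    (hg : ∀ x, g x = ∑' i, ρ x * θ i x / ∑' j, ∫ y, ρ y * θ j y ∂μ) :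
    ∫ x, |g x - ρ x| ∂μ ≤ (b - a) / a := by
  set Z := ∑' j, ∫ y, ρ y * θ j y ∂μ
  obtain ⟨hZa, hZb⟩ : Z ∈ Set.Icc a b := tsum_integral_mul_mem_Icc hρ hρ1 hθ hθm hsum hbd ha
  have hZ : 0 < Z := ha.trans_le hZa
  have hρi : Integrable ρ μ := .of_integral_ne_zero (by simp [hρ1])
  have hpt : ∀ x, |g x - ρ x| ≤ ρ x * ((b - a) / a) := by
    intro x
    have hgx : g x - ρ x = ρ x * (∑' i, θ i x - Z) / Z := by
      rw [hg x, tsum_div_const, tsum_mul_left]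
      field_simp
    have hsZ : |∑' i, θ i x - Z| ≤ b - a :=
      abs_sub_le_iff.2 ⟨by linarith [(hbd x).2], by linarith [(hbd x).1]⟩
    rw [hgx, abs_div, abs_mul, abs_of_nonneg (hρ x), abs_of_pos hZ, mul_div_assoc]
    exact mul_le_mul_of_nonneg_left (div_le_div₀ (by linarith) hsZ ha hZa) (hρ x)
  calc ∫ x, |g x - ρ x| ∂μ ≤ ∫ x, ρ x * ((b - a) / a) ∂μ :=
        integral_mono_of_nonneg (ae_of_all _ fun x => abs_nonneg _) (hρi.mul_const _)
          (ae_of_all _ hpt)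
    _ = (b - a) / a := by rw [integral_mul_const, hρ1, one_mul]

end Mixture

section LinearAlgebra

variable {n : Type*} [Fintype n] [DecidableEq n]

theorem Matrix.PosDef.isUnit_det {A : Matrix n n ℂ} (hA : A.PosDef) : IsUnit A.det :=
  (isUnit_iff_isUnit_det A).1 hA.isUnit

theorem Matrix.PosDef.re_det_pos {A : Matrix n n ℂ} (hA : A.PosDef) : 0 < A.det.re :=
  (Complex.pos_iff.1 hA.det_pos).1

theorem Matrix.PosDef.det_eq_re {A : Matrix n n ℂ} (hA : A.PosDef) :
    A.det = (A.det.re : ℂ) :=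
  Complex.eq_re_of_ofReal_le (r := 0) (by simpa using hA.det_pos.le)

theorem Matrix.integral_comp_mulVec_of_mem_unitaryGroup {E : Type*} [NormedAddCommGroup E]
    [NormedSpace ℝ E] {U : Matrix n n ℂ} (hU : U ∈ unitaryGroup n ℂ) (g : (n → ℂ) → E) :
    ∫ x, g (U *ᵥ x) = ∫ x, g x := by
  let f : (n → ℂ) →ₗ[ℝ] (n → ℂ) := (Matrix.toLin' U).restrictScalars ℝ
  have hdet : LinearMap.det f = 1 := by
    rw [LinearMap.det_restrictScalars, LinearMap.det_toLin', Algebra.norm_complex_apply]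
    have h := Unitary.star_mul_self_of_mem (Matrix.det_of_mem_unitary hU)
    rw [Complex.star_def, ← Complex.normSq_eq_conj_mul_self] at h
    exact_mod_cast h
  have hmp : MeasurePreserving f := by
    refine ⟨f.continuous_of_finiteDimensional.measurable, ?_⟩
    rw [Measure.map_linearMap_addHaar_eq_smul_addHaar _ (by simp [hdet])]
    simp [hdet]
  exact hmp.integral_comp
    (UnitaryGroup.toLinearEquiv ⟨U, hU⟩).toContinuousLinearEquiv.toHomeomorph.measurableEmbedding g

theorem Matrix.IsHermitian.re_star_dotProduct_mulVec {P : Matrix n n ℂ} (hP : P.IsHermitian)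
    (x : n → ℂ) :
    (star x ⬝ᵥ P *ᵥ x).re =
      ∑ i, hP.eigenvalues i * ‖(star (hP.eigenvectorUnitary : Matrix n n ℂ) *ᵥ x) i‖ ^ 2 := by
  set U : Matrix n n ℂ := ↑hP.eigenvectorUnitary
  have hU : star x ᵥ* U = star (star U *ᵥ x) := by
    rw [star_mulVec, star_eq_conjTranspose, conjTranspose_conjTranspose]
  conv_lhs => rw [hP.spectral_theorem, Unitary.conjStarAlgAut_apply]
  rw [← mulVec_mulVec, ← mulVec_mulVec, dotProduct_mulVec, hU]
  simp only [dotProduct, mulVec_diagonal, Complex.re_sum, Function.comp_apply, Pi.star_apply]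
  refine Finset.sum_congr rfl fun i _ => ?_
  rw [Complex.sq_norm, Complex.normSq_apply]
  simp [Complex.mul_re]
  ring

theorem Matrix.eq_mul_inv_add_mul_of_inv_eq_inv_add_inv {K : Type*} [Field K]
    {A B C : Matrix n n K} (hA : IsUnit A.det) (hB : IsUnit B.det) (hC : IsUnit C.det)
    (h : C⁻¹ = A⁻¹ + B⁻¹) : C = B * (A + B)⁻¹ * A := by
  have h' : C⁻¹ = A⁻¹ * (A + B) * B⁻¹ := by
    rw [h, Matrix.mul_add, nonsing_inv_mul _ hA, Matrix.add_mul, Matrix.one_mul, mul_assoc,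
      mul_nonsing_inv _ hB, Matrix.mul_one, add_comm]
  rw [← nonsing_inv_nonsing_inv C hC, h', Matrix.mul_inv_rev, Matrix.mul_inv_rev,
    nonsing_inv_nonsing_inv _ hA, nonsing_inv_nonsing_inv _ hB, mul_assoc]

theorem Matrix.inv_mul_mul_inv_eq_inv_sub_inv_add {K : Type*} [Field K]
    {A B C : Matrix n n K} (hA : IsUnit A.det) (hB : IsUnit B.det) (hC : IsUnit C.det)
    (hAB : IsUnit (A + B).det) (h : C⁻¹ = A⁻¹ + B⁻¹) :
    B⁻¹ * C * B⁻¹ = B⁻¹ - (A + B)⁻¹ := by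
  calc B⁻¹ * C * B⁻¹ = (A + B)⁻¹ * ((A + B) - B) * B⁻¹ := by
        rw [eq_mul_inv_add_mul_of_inv_eq_inv_add_inv hA hB hC h, ← mul_assoc, ← mul_assoc,
          nonsing_inv_mul _ hB, Matrix.one_mul, add_sub_cancel_right]
    _ = B⁻¹ - (A + B)⁻¹ := by
        rw [Matrix.mul_sub, nonsing_inv_mul _ hAB, Matrix.sub_mul, Matrix.one_mul, mul_assoc,
          mul_nonsing_inv _ hB, Matrix.mul_one]

theorem Matrix.det_add_mul_det_of_inv_eq_inv_add_inv {K : Type*} [Field K]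
    {A B C : Matrix n n K} (hA : IsUnit A.det) (hB : IsUnit B.det) (hC : IsUnit C.det)
    (hAB : IsUnit (A + B).det) (h : C⁻¹ = A⁻¹ + B⁻¹) :
    (A + B).det * C.det = A.det * B.det := by
  rw [eq_mul_inv_add_mul_of_inv_eq_inv_add_inv hA hB hC h, det_mul, det_mul, det_nonsing_inv,
    Ring.inverse_eq_inv]
  field_simp [hAB.ne_zero]

theorem Matrix.PosDef.of_inv_eq_inv_add_inv {A B C : Matrix n n ℂ} (hA : A.PosDef)
    (hB : B.PosDef) (h : C⁻¹ = A⁻¹ + B⁻¹) : C.PosDef :=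
  posDef_inv_iff.1 (h ▸ hA.inv.add hB.inv)

theorem Matrix.star_dotProduct_mulVec_add_eq_of_inv_eq_inv_add_inv {A B C : Matrix n n ℂ}
    (hA : A.PosDef) (hB : B.PosDef) (h : C⁻¹ = A⁻¹ + B⁻¹) (x y : n → ℂ) :
    star y ⬝ᵥ A⁻¹ *ᵥ y + star (x - y) ⬝ᵥ B⁻¹ *ᵥ (x - y) =
      star x ⬝ᵥ (A + B)⁻¹ *ᵥ x +
        star (C *ᵥ B⁻¹ *ᵥ x - y) ⬝ᵥ C⁻¹ *ᵥ (C *ᵥ B⁻¹ *ᵥ x - y) := by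
  have hC := hA.of_inv_eq_inv_add_inv hB h
  set m := C *ᵥ B⁻¹ *ᵥ x
  have hCm : C⁻¹ *ᵥ m = B⁻¹ *ᵥ x := by
    rw [mulVec_mulVec, nonsing_inv_mul _ hC.isUnit_det, one_mulVec]
  have hmy : star m ⬝ᵥ C⁻¹ *ᵥ y = star x ⬝ᵥ B⁻¹ *ᵥ y := by
    rw [star_mulVec, ← dotProduct_mulVec, hC.isHermitian.eq, mulVec_mulVec,
      mul_nonsing_inv _ hC.isUnit_det, one_mulVec, star_mulVec, ← dotProduct_mulVec,
      hB.inv.isHermitian.eq]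
  have hmx : star m ⬝ᵥ B⁻¹ *ᵥ x = star x ⬝ᵥ B⁻¹ *ᵥ x - star x ⬝ᵥ (A + B)⁻¹ *ᵥ x := by
    rw [star_mulVec, ← dotProduct_mulVec, hC.isHermitian.eq, star_mulVec, ← dotProduct_mulVec,
      hB.inv.isHermitian.eq, mulVec_mulVec, mulVec_mulVec,
      inv_mul_mul_inv_eq_inv_sub_inv_add hA.isUnit_det hB.isUnit_det hC.isUnit_det
        (hA.add hB).isUnit_det h, sub_mulVec, dotProduct_sub]
  have hyy : star y ⬝ᵥ C⁻¹ *ᵥ y = star y ⬝ᵥ A⁻¹ *ᵥ y + star y ⬝ᵥ B⁻¹ *ᵥ y := by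
    rw [h, add_mulVec, dotProduct_add]
  simp only [star_sub, sub_dotProduct, mulVec_sub, dotProduct_sub, hCm, hmy, hmx, hyy]
  ring

end LinearAlgebra

theorem integral_exp_neg_mul_sq_norm_complex {b : ℝ} (hb : 0 < b) :
    ∫ z : ℂ, Real.exp (-(b * ‖z‖ ^ 2)) = π / b := by
  simp_rw [← neg_mul]
  rw [GaussianFourier.integral_rexp_neg_mul_sq_norm hb]
  simp [Complex.finrank_real_complex]

section ComplexGaussian

variable {k : ℕ} {A B C : Matrix (Fin k) (Fin k) ℂ}

theorem complexGaussian_pos (hA : A.PosDef) (z : Fin k → ℂ) : 0 < complexGaussian A z := by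
  have := hA.re_det_pos
  unfold complexGaussian
  positivity

theorem continuous_complexGaussian (A : Matrix (Fin k) (Fin k) ℂ) :
    Continuous (complexGaussian A) := by
  unfold complexGaussian
  simp only [dotProduct, mulVec, Pi.star_apply]
  fun_prop

theorem integral_complexGaussian (hA : A.PosDef) : ∫ x, complexGaussian A x = 1 := by
  have hP := hA.inv.isHermitian
  have hprod : ∏ i, hP.eigenvalues i = (A.det.re)⁻¹ := by
    have h := hP.det_eq_prod_eigenvalues
    rw [det_nonsing_inv, Ring.inverse_eq_inv, hA.det_eq_re] at h
    exact Complex.ofReal_injective (by push_cast; simpa using h.symm)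
  let V : Matrix (Fin k) (Fin k) ℂ := star ↑hP.eigenvectorUnitary
  let G : (Fin k → ℂ) → ℝ := fun y => ∏ i, Real.exp (-(hP.eigenvalues i * ‖y i‖ ^ 2))
  calc ∫ x, complexGaussian A x = ∫ x, (π ^ k * A.det.re)⁻¹ * G (V *ᵥ x) := by
        simp only [complexGaussian, G, V, hP.re_star_dotProduct_mulVec, ← Finset.sum_neg_distrib,
          Real.exp_sum]
    _ = (π ^ k * A.det.re)⁻¹ * ∏ i, ∫ z : ℂ, Real.exp (-(hP.eigenvalues i * ‖z‖ ^ 2)) := by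
        rw [integral_const_mul, integral_comp_mulVec_of_mem_unitaryGroup
          (Unitary.star_mem hP.eigenvectorUnitary.2) G, integral_fintype_prod_volume_eq_prod
          fun i (z : ℂ) => Real.exp (-(hP.eigenvalues i * ‖z‖ ^ 2))]
    _ = 1 := by
        simp only [integral_exp_neg_mul_sq_norm_complex (hA.inv.eigenvalues_pos _),
          Finset.prod_div_distrib, Finset.prod_const, Finset.card_univ, Fintype.card_fin, hprod]
        have := hA.re_det_pos
        field_simp

theorem complexGaussian_mul_complexGaussian_sub (hA : A.PosDef) (hB : B.PosDef)
    (h : C⁻¹ = A⁻¹ + B⁻¹) (x y : Fin k → ℂ) :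
    complexGaussian A y * complexGaussian B (x - y) =
      complexGaussian (A + B) x * complexGaussian C (C *ᵥ B⁻¹ *ᵥ x - y) := by
  have hC := hA.of_inv_eq_inv_add_inv hB h
  have hdet : (A + B).det.re * C.det.re = A.det.re * B.det.re := by
    have := det_add_mul_det_of_inv_eq_inv_add_inv hA.isUnit_det hB.isUnit_det hC.isUnit_det
      (hA.add hB).isUnit_det h
    rw [hA.det_eq_re, hB.det_eq_re, hC.det_eq_re, (hA.add hB).det_eq_re] at this
    exact_mod_cast this
  unfold complexGaussian
  rw [mul_mul_mul_comm, mul_mul_mul_comm ((π ^ k * (A + B).det.re)⁻¹), ← Real.exp_add,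
    ← Real.exp_add, ← neg_add, ← neg_add, ← Complex.add_re, ← Complex.add_re,
    star_dotProduct_mulVec_add_eq_of_inv_eq_inv_add_inv hA hB h, ← mul_inv, ← mul_inv]
  congr 2
  linear_combination π ^ k * π ^ k * hdet.symm

theorem complexGaussian_eq_integral_mul (hA : A.PosDef) (hB : B.PosDef)
    (h : C⁻¹ = A⁻¹ + B⁻¹) (y : Fin k → ℂ) :
    complexGaussian A y =
      ∫ x, complexGaussian (A + B) x * complexGaussian C (C *ᵥ B⁻¹ *ᵥ x - y) := by
  calc complexGaussian A y = complexGaussian A y * ∫ x, complexGaussian B (x - y) := by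
        rw [integral_sub_right_eq_self, integral_complexGaussian hB, mul_one]
    _ = ∫ x, complexGaussian A y * complexGaussian B (x - y) := (integral_const_mul _ _).symm
    _ = _ := by simp_rw [complexGaussian_mul_complexGaussian_sub hA hB h]

end ComplexGaussian

theorem generalized_regev_general {k : ℕ}
    (L : Submodule ℤ (Fin k → ℂ))
    (cv : Fin k → ℂ)
    (Sig1 Sig2 Sig0 Sig : Matrix (Fin k) (Fin k) ℂ)
    (h1 : Sig1.PosDef) (h2 : Sig2.PosDef)
    (h0 : Sig0 = Sig1 + Sig2)
    (hSinv : Sig⁻¹ = Sig1⁻¹ + Sig2⁻¹)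
    (Vol ε : ℝ) (hVol : 0 < Vol)
    -- flatness factor of `Λ` w.r.t. `√Σ` is at most `ε`
    (hflat : ∀ z : Fin k → ℂ,
      |Vol * (∑' l : L, complexGaussian Sig (z - (l : Fin k → ℂ))) - 1| ≤ ε)
    (hε : ε ≤ 1 / 2)
    -- `g` is the density of `X = X₁ + X₂`
    (g : (Fin k → ℂ) → ℝ)
    (hg : ∀ x : Fin k → ℂ,
      g x = ∑' l : L,
        (complexGaussian Sig1 ((l : Fin k → ℂ) + cv) /
          (∑' l' : L, complexGaussian Sig1 ((l' : Fin k → ℂ) + cv))) *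
          complexGaussian Sig2 (x - ((l : Fin k → ℂ) + cv))) :
    (∫ x : Fin k → ℂ, |g x - complexGaussian Sig0 x|) ≤ 4 * ε := by
  subst h0
  have hS := h1.of_inv_eq_inv_add_inv h2 hSinv
  have h0 := h1.add h2
  have hε0 : 0 ≤ ε := (abs_nonneg _).trans (hflat 0)
  have ha : 0 < (1 - ε) / Vol := div_pos (by linarith) hVol
  set θ : L → (Fin k → ℂ) → ℝ := fun l x => complexGaussian Sig (Sig *ᵥ Sig2⁻¹ *ᵥ x - cv - l)
  have hbd : ∀ x, ∑' l, θ l x ∈ Set.Icc ((1 - ε) / Vol) ((1 + ε) / Vol) := fun x => by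
    obtain ⟨hlo, hhi⟩ := abs_le.1 (hflat (Sig *ᵥ Sig2⁻¹ *ᵥ x - cv))
    exact ⟨by rw [div_le_iff₀ hVol]; linarith, by rw [le_div_iff₀ hVol]; linarith⟩
  have hsum : ∀ x, Summable (θ · x) := fun x => by
    by_contra hns
    linarith [(hbd x).1, tsum_eq_zero_of_not_summable hns]
  have : Countable L := Set.countable_univ_iff.1 <|
    (hsum 0).countable_support.mono fun l _ => (complexGaussian_pos hS _).ne'
  have hw : ∀ l : L, complexGaussian Sig1 (l + cv) = ∫ x, complexGaussian (Sig1 + Sig2) x * θ l x :=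
    fun l => by simp_rw [complexGaussian_eq_integral_mul h1 h2 hSinv, sub_add_eq_sub_sub_swap, θ]
  have hg' : ∀ x, g x = ∑' l, complexGaussian (Sig1 + Sig2) x * θ l x /
      ∑' l', ∫ y, complexGaussian (Sig1 + Sig2) y * θ l' y := fun x => by
    rw [hg x, tsum_congr hw]
    refine tsum_congr fun l => ?_
    rw [div_mul_eq_mul_div, complexGaussian_mul_complexGaussian_sub h1 h2 hSinv,
      sub_add_eq_sub_sub_swap]
  calc (∫ x, |g x - complexGaussian (Sig1 + Sig2) x|)
      ≤ ((1 + ε) / Vol - (1 - ε) / Vol) / ((1 - ε) / Vol) :=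
        integral_abs_tsum_div_sub_le (fun x => (complexGaussian_pos h0 x).le)
          (integral_complexGaussian h0) (fun l x => (complexGaussian_pos hS _).le)
          (fun l => ((continuous_complexGaussian Sig).comp (by fun_prop)).aestronglyMeasurable)
          hsum hbd ha hg'
    _ ≤ 4 * ε := by
        rw [div_le_iff₀ ha, ← sub_div, mul_div_assoc']
        gcongr
        nlinarith

/-- Generalized Regev lemma: if `X₁ ~ D_{Λ+c,√Σ₁}` (discrete Gaussian) and
`X₂ ~ f_{√Σ₂}` (continuous Gaussian) are independent, `Σ₀ = Σ₁+Σ₂`,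
`Σ⁻¹ = Σ₁⁻¹+Σ₂⁻¹`, and the flatness factor satisfies `ε_Λ(√Σ) ≤ ε ≤ 1/2`,
then the density `g` of `X = X₁+X₂` satisfies `𝕍(g, f_{√Σ₀}) ≤ 4ε`. -/
theorem generalized_regev {k : ℕ}
    (L : Submodule ℤ (Fin k → ℂ)) [DiscreteTopology L]
    (cv : Fin k → ℂ)
    (Sig1 Sig2 Sig0 Sig : Matrix (Fin k) (Fin k) ℂ)
    (h1 : Sig1.PosDef) (h2 : Sig2.PosDef) (hS : Sig.PosDef)
    (h0 : Sig0 = Sig1 + Sig2)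
    (hSinv : Sig⁻¹ = Sig1⁻¹ + Sig2⁻¹)
    (Vol ε : ℝ) (hVol : 0 < Vol)
    -- flatness factor of `Λ` w.r.t. `√Σ` is at most `ε`
    (hflat : ∀ z : Fin k → ℂ,
      |Vol * (∑' l : L, complexGaussian Sig (z - (l : Fin k → ℂ))) - 1| ≤ ε)
    (hε : ε ≤ 1 / 2)
    -- `g` is the density of `X = X₁ + X₂`
    (g : (Fin k → ℂ) → ℝ)
    (hg : ∀ x : Fin k → ℂ,
      g x = ∑' l : L,
        (complexGaussian Sig1 ((l : Fin k → ℂ) + cv) /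
          (∑' l' : L, complexGaussian Sig1 ((l' : Fin k → ℂ) + cv))) *
          complexGaussian Sig2 (x - ((l : Fin k → ℂ) + cv))) :
    (∫ x : Fin k → ℂ, |g x - complexGaussian Sig0 x|) ≤ 4 * ε :=
  generalized_regev_general L cv Sig1 Sig2 Sig0 Sig h1 h2 h0 hSinv Vol ε hVol hflat hε g hg
end

section
/- Let Λ ⊂ ℂ^k be a lattice, x sampled from the discrete Gaussian D_{Λ+c,σ} (scalar covariance σ²I), and A ∈ M_k(ℂ). If the flatness factor ε_Λ(σ) < 1, then for all t ∈ ℂ^k, 𝔼[e^{Re(t†Ax)}] ≤ ((1+ε_Λ(σ))/(1−ε_Λ(σ)))·e^{(σ²/4)·‖A†t‖²}. In particular, x is δ-subgaussian with parameter σ for δ = ln((1+ε_Λ(σ))/(1−ε_Λ(σ))). -/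
open Matrix
open scoped Real

/-- Squared Euclidean norm on `ℂ^k`. -/
noncomputable def cNormSq {k : ℕ} (z : Fin k → ℂ) : ℝ := ∑ i, Complex.normSq (z i)

/-- Scalar complex Gaussian density `f_σ(z) = (πσ²)^{-k} e^{-‖z‖²/σ²}`. -/
noncomputable def scalarGaussian {k : ℕ} (σ : ℝ) (z : Fin k → ℂ) : ℝ :=
  ((π * σ ^ 2) ^ k)⁻¹ * Real.exp (-cNormSq z / σ ^ 2)

lemma cNormSq_neg' {k : ℕ} (v : Fin k → ℂ) : cNormSq (-v) = cNormSq v := by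
  simp [cNormSq]

lemma scalarGaussian_neg {k : ℕ} (σ : ℝ) (v : Fin k → ℂ) :
    scalarGaussian σ (-v) = scalarGaussian σ v := by
  simp [scalarGaussian, cNormSq_neg']

lemma cNormSq_sub' {k : ℕ} (x a : Fin k → ℂ) :
    cNormSq (x - a) = cNormSq x - 2 * (star a ⬝ᵥ x).re + cNormSq a := by
  simp only [cNormSq, dotProduct, Pi.sub_apply, Pi.star_apply, Complex.re_sum,
    Finset.mul_sum, ← Finset.sum_add_distrib, ← Finset.sum_sub_distrib]
  refine Finset.sum_congr rfl fun i _ => ?_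
  simp [Complex.normSq_apply, Complex.sub_re, Complex.sub_im, Complex.mul_re,
    Complex.conj_re, Complex.conj_im, RCLike.star_def]
  ring

lemma cNormSq_smul' {k : ℕ} (c : ℝ) (v : Fin k → ℂ) :
    cNormSq (c • v) = c ^ 2 * cNormSq v := by
  simp only [cNormSq, Pi.smul_apply, Finset.mul_sum]
  refine Finset.sum_congr rfl fun i _ => ?_
  rw [Complex.real_smul, Complex.normSq_mul, Complex.normSq_ofReal]
  ring

lemma key_identity {k : ℕ} (σ : ℝ) (hσ : 0 < σ) (w x : Fin k → ℂ) :
    scalarGaussian σ x * Real.exp ((star w ⬝ᵥ x).re)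
      = Real.exp (σ ^ 2 / 4 * cNormSq w) *
        scalarGaussian σ (x - (σ ^ 2 / 2 : ℝ) • w) := by
  have hdot : (star ((σ ^ 2 / 2 : ℝ) • w) ⬝ᵥ x).re
      = (σ ^ 2 / 2) * (star w ⬝ᵥ x).re := by
    simp only [dotProduct, Pi.star_apply, Pi.smul_apply, Complex.re_sum, Finset.mul_sum]
    refine Finset.sum_congr rfl fun i _ => ?_
    rw [Complex.real_smul, RCLike.star_def, _root_.map_mul, Complex.conj_ofReal]
    rw [mul_assoc, Complex.re_ofReal_mul]
  unfold scalarGaussian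
  rw [cNormSq_sub', hdot, cNormSq_smul']
  rw [mul_assoc, ← Real.exp_add, mul_comm (Real.exp _), mul_assoc, ← Real.exp_add]
  congr 1
  have h2 : σ ^ 2 ≠ 0 := by positivity
  field_simp
  ring

/-- Subgaussian moment bound for linear images of a discrete Gaussian over a lattice:
if `x ~ D_{Λ+c,σ}` and `ε_Λ(σ) ≤ ε < 1`, then for every `t`,
`𝔼[e^{Re(t†Ax)}] ≤ ((1+ε)/(1−ε)) e^{(σ²/4)‖A†t‖²}`; in particular, `x` is
`δ`-subgaussian with parameter `σ` for `δ = ln((1+ε)/(1−ε))`. -/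
theorem discrete_gaussian_subgaussian {k : ℕ}
    (L : Submodule ℤ (Fin k → ℂ)) [DiscreteTopology L]
    (cv : Fin k → ℂ) (σ : ℝ) (hσ : 0 < σ)
    (A : Matrix (Fin k) (Fin k) ℂ)
    (Vol ε : ℝ) (hVol : 0 < Vol) (hε : ε < 1)
    -- the flatness factor of `Λ` w.r.t. `σ` is at most `ε`
    (hflat : ∀ z : Fin k → ℂ,
      |Vol * (∑' l : L, scalarGaussian σ (z - (l : Fin k → ℂ))) - 1| ≤ ε) :
    ∀ t : Fin k → ℂ,
      (∑' l : L, scalarGaussian σ ((l : Fin k → ℂ) + cv) *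
          Real.exp ((star t ⬝ᵥ A.mulVec ((l : Fin k → ℂ) + cv)).re)) /
        (∑' l : L, scalarGaussian σ ((l : Fin k → ℂ) + cv))
      ≤ (1 + ε) / (1 - ε) * Real.exp (σ ^ 2 / 4 * cNormSq (Aᴴ.mulVec t)) := by
  intro t
  set w : Fin k → ℂ := Aᴴ.mulVec t with hw
  have hε1 : (0:ℝ) < 1 - ε := by linarith
  -- bounds on shifted lattice sums
  have hbound : ∀ z : Fin k → ℂ,
      (1 - ε) / Vol ≤ (∑' l : L, scalarGaussian σ (z - (l : Fin k → ℂ))) ∧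
      (∑' l : L, scalarGaussian σ (z - (l : Fin k → ℂ))) ≤ (1 + ε) / Vol := by
    intro z
    have h := abs_le.mp (hflat z)
    constructor
    · rw [div_le_iff₀ hVol]; linarith [h.1]
    · rw [le_div_iff₀ hVol]; linarith [h.2]
  -- rewrite exponent via w
  have hdotAw : ∀ v : Fin k → ℂ, star t ⬝ᵥ A.mulVec v = star w ⬝ᵥ v := by
    intro v
    rw [hw, Matrix.star_mulVec, Matrix.conjTranspose_conjTranspose,
      Matrix.dotProduct_mulVec]
  -- numerator identity
  set a : Fin k → ℂ := (σ ^ 2 / 2 : ℝ) • w with ha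
  have hnum : (∑' l : L, scalarGaussian σ ((l : Fin k → ℂ) + cv) *
        Real.exp ((star t ⬝ᵥ A.mulVec ((l : Fin k → ℂ) + cv)).re))
      = Real.exp (σ ^ 2 / 4 * cNormSq w) *
        (∑' l : L, scalarGaussian σ ((a - cv) - (l : Fin k → ℂ))) := by
    rw [← tsum_mul_left]
    refine tsum_congr fun l => ?_
    rw [hdotAw, key_identity σ hσ w]
    congr 1
    rw [← scalarGaussian_neg]
    congr 1
    abel
  have hden : (∑' l : L, scalarGaussian σ ((l : Fin k → ℂ) + cv))
      = ∑' l : L, scalarGaussian σ ((-cv) - (l : Fin k → ℂ)) := by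
    refine tsum_congr fun l => ?_
    rw [← scalarGaussian_neg]
    congr 1
    abel
  have hdenpos : 0 < ∑' l : L, scalarGaussian σ ((l : Fin k → ℂ) + cv) := by
    rw [hden]
    exact lt_of_lt_of_le (by positivity) (hbound (-cv)).1
  rw [div_le_iff₀ hdenpos, hnum]
  have hnb : (∑' l : L, scalarGaussian σ ((a - cv) - (l : Fin k → ℂ))) ≤ (1 + ε) / Vol :=
    (hbound (a - cv)).2
  have hdb : (1 - ε) / Vol ≤ ∑' l : L, scalarGaussian σ ((l : Fin k → ℂ) + cv) := by
    rw [hden]; exact (hbound (-cv)).1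
  have hE : (0:ℝ) < Real.exp (σ ^ 2 / 4 * cNormSq w) := Real.exp_pos _
  calc Real.exp (σ ^ 2 / 4 * cNormSq w) *
        (∑' l : L, scalarGaussian σ ((a - cv) - (l : Fin k → ℂ)))
      ≤ Real.exp (σ ^ 2 / 4 * cNormSq w) * ((1 + ε) / Vol) := by
        exact mul_le_mul_of_nonneg_left hnb hE.le
    _ = ((1 + ε) / (1 - ε) * Real.exp (σ ^ 2 / 4 * cNormSq w)) * ((1 - ε) / Vol) := by
        field_simp
    _ ≤ ((1 + ε) / (1 - ε) * Real.exp (σ ^ 2 / 4 * cNormSq w)) *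
        (∑' l : L, scalarGaussian σ ((l : Fin k → ℂ) + cv)) := by
        apply mul_le_mul_of_nonneg_left hdb
        have hε0 : (0:ℝ) ≤ ε := le_trans (abs_nonneg _) (hflat 0)
        exact mul_nonneg (div_nonneg (by linarith) hε1.le) hE.le
end

section
/- Let F be a totally complex number field of degree 2k with discriminant d_F, ψ its relative canonical embedding into ℂ^k, and I a fractional ideal. Then the normalized product distance of the ideal lattice ψ(I) satisfies Np(ψ(I)) := p(ψ(I))/V(ψ(I))^{1/2} ≥ 2^{k/2}/|d_F|^{1/4}. -/
/-!
Pairing each `σ i` with its complex conjugate exhausts all embeddings of `F`, so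
`(∏ i, ‖σ i x‖)² = |N(x)|`. For `0 ≠ x ∈ I` the principal ideal `(x)` is `I` times an integral
ideal, whence `|N(x)| ≥ N(I)`. Hence `p(ψ(I)) ≥ √N(I)`, and dividing by
`√V = √N(I) · |d_F|^{1/4} / 2^{k/2}` gives the bound.
-/

open NumberField
open scoped nonZeroDivisors

theorem FractionalIdeal.absNorm_le_absNorm_of_le {R K : Type*} [CommRing R] [IsDedekindDomain R]
    [Module.Free ℤ R] [Module.Finite ℤ R] [Field K] [Algebra R K] [IsFractionRing R K]
    {I J : FractionalIdeal R⁰ K} (hJ : J ≠ 0) (hJI : J ≤ I) : absNorm I ≤ absNorm J := by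
  have hI : I ≠ 0 := by
    rintro rfl
    exact hJ (le_bot_iff.mp hJI)
  obtain ⟨C, hC⟩ := le_one_iff_exists_coeIdeal.mp
    ((mul_le_mul_right hJI I⁻¹).trans (inv_mul_cancel₀ hI).le)
  have hJ_eq : J = I * C := by rw [hC, ← mul_assoc, mul_inv_cancel₀ hI, one_mul]
  have hC_ne : C ≠ ⊥ := by
    rintro rfl
    simp [hJ_eq] at hJ
  have hC_norm : 1 ≤ absNorm (C : FractionalIdeal R⁰ K) := by
    rw [coeIdeal_absNorm]
    exact_mod_cast Nat.one_le_iff_ne_zero.mpr (Ideal.absNorm_eq_zero_iff.not.mpr hC_ne)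
  calc absNorm I = absNorm I * 1 := (mul_one _).symm
    _ ≤ absNorm I * absNorm (C : FractionalIdeal R⁰ K) :=
      mul_le_mul_of_nonneg_left hC_norm (absNorm_nonneg I)
    _ = absNorm J := by rw [hJ_eq, map_mul]

theorem bijective_sum_elim_conj_comp {F ι : Type*} [Ring F] (σ : ι → (F →+* ℂ))
    (hinj : Function.Injective σ)
    (hpair : ∀ φ : F →+* ℂ, (∃ i, φ = σ i) ∨ (∃ i, φ = (starRingEnd ℂ).comp (σ i)))
    (hdistinct : ∀ i j, σ i ≠ (starRingEnd ℂ).comp (σ j)) :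
    Function.Bijective (Sum.elim σ fun i ↦ (starRingEnd ℂ).comp (σ i)) := by
  refine ⟨?_, fun φ ↦ ?_⟩
  · rintro (i | i) (j | j) h <;> simp only [Sum.elim_inl, Sum.elim_inr] at h
    · exact congr_arg Sum.inl (hinj h)
    · exact absurd h (hdistinct i j)
    · exact absurd h.symm (hdistinct j i)
    · exact congr_arg Sum.inr <| hinj <| RingHom.ext fun y ↦
        star_injective (RingHom.congr_fun h y)
  · rcases hpair φ with ⟨i, rfl⟩ | ⟨i, rfl⟩
    exacts [⟨Sum.inl i, rfl⟩, ⟨Sum.inr i, rfl⟩]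

theorem Real.sqrt_mul_two_zpow_neg_mul_sqrt {N d : ℝ} (hN : 0 ≤ N) (hd : 0 ≤ d) (k : ℕ) :
    √(N * 2 ^ (-(k : ℤ)) * √d) = √N * d ^ ((1 : ℝ) / 4) / 2 ^ ((k : ℝ) / 2) := by
  have h_two : √(2 ^ (-(k : ℤ))) = (2 ^ ((k : ℝ) / 2))⁻¹ := by
    rw [zpow_neg, zpow_natCast, sqrt_inv, sqrt_eq_rpow, ← rpow_natCast, ← rpow_mul zero_le_two]
    ring_nf
  have h_d : √(√d) = d ^ ((1 : ℝ) / 4) := by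
    rw [sqrt_eq_rpow, sqrt_eq_rpow, ← rpow_mul hd]
    norm_num
  rw [sqrt_mul (by positivity), sqrt_mul hN, h_two, h_d]
  ring

namespace NumberField

variable {F : Type*} [Field F] [NumberField F]

theorem absNorm_le_abs_norm_of_mem {I : FractionalIdeal (𝓞 F)⁰ F} {x : F} (hx : x ∈ I)
    (hx0 : x ≠ 0) : FractionalIdeal.absNorm I ≤ |Algebra.norm ℚ x| := by
  rw [← FractionalIdeal.absNorm_span_singleton (𝓞 F)]
  exact FractionalIdeal.absNorm_le_absNorm_of_le
    (FractionalIdeal.spanSingleton_ne_zero_iff.mpr hx0)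
    (FractionalIdeal.spanSingleton_le_iff_mem.mpr hx)

theorem prod_embeddings_norm_eq_abs_norm (x : F) :
    ∏ φ : F →+* ℂ, ‖φ x‖ = |(Algebra.norm ℚ x : ℝ)| := by
  rw [← Fintype.prod_equiv (RingHom.equivRatAlgHom F ℂ).symm (fun f ↦ ‖f x‖) _ fun _ ↦ rfl,
    ← norm_prod, ← Algebra.norm_eq_prod_embeddings, eq_ratCast, Complex.norm_ratCast]

section HalfSystem

variable {ι : Type*} [Fintype ι] {σ : ι → (F →+* ℂ)}
  (hinj : Function.Injective σ)
  (hpair : ∀ φ : F →+* ℂ, (∃ i, φ = σ i) ∨ (∃ i, φ = (starRingEnd ℂ).comp (σ i)))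
  (hdistinct : ∀ i j, σ i ≠ (starRingEnd ℂ).comp (σ j))
include hinj hpair hdistinct

theorem sq_prod_norm_eq_abs_norm (x : F) :
    (∏ i, ‖σ i x‖) ^ 2 = |(Algebra.norm ℚ x : ℝ)| := by
  let e := Equiv.ofBijective _ (bijective_sum_elim_conj_comp σ hinj hpair hdistinct)
  rw [← prod_embeddings_norm_eq_abs_norm, ← Fintype.prod_equiv e (fun s ↦ ‖e s x‖) _ fun _ ↦ rfl,
    Fintype.prod_sum_type]
  simp [e, sq]

theorem sqrt_absNorm_le_prod_norm {I : FractionalIdeal (𝓞 F)⁰ F} {x : F} (hx : x ∈ I)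
    (hx0 : x ≠ 0) : √(FractionalIdeal.absNorm I : ℝ) ≤ ∏ i, ‖σ i x‖ := by
  rw [← Real.sqrt_sq (Finset.prod_nonneg fun i _ ↦ norm_nonneg (σ i x)),
    sq_prod_norm_eq_abs_norm hinj hpair hdistinct]
  exact Real.sqrt_le_sqrt (by exact_mod_cast absNorm_le_abs_norm_of_mem hx hx0)

end HalfSystem

end NumberField

theorem normalized_product_distance_ideal_lattice_general {F : Type*} [Field F] [NumberField F]
    {k : ℕ}
    (σ : Fin k → (F →+* ℂ))
    (hinj : Function.Injective σ)
    (hpair : ∀ φ : F →+* ℂ, (∃ i, φ = σ i) ∨ (∃ i, φ = (starRingEnd ℂ).comp (σ i)))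
    (hdistinct : ∀ i j, σ i ≠ (starRingEnd ℂ).comp (σ j))
    (I : FractionalIdeal (𝓞 F)⁰ F) (hI : I ≠ 0)
    (V : ℝ)
    -- the covolume of the ideal lattice `ψ(I) ⊂ ℂ^k ≅ ℝ^{2k}`
    (hV : V = (FractionalIdeal.absNorm I : ℝ) * 2 ^ (-(k : ℤ)) *
      Real.sqrt |(NumberField.discr F : ℝ)|) :
    sInf {r : ℝ | ∃ x ∈ I, x ≠ 0 ∧ r = ∏ i, ‖σ i x‖} / Real.sqrt V ≥
      2 ^ ((k : ℝ) / 2) / |(NumberField.discr F : ℝ)| ^ ((1 : ℝ) / 4) := by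
  set N : ℝ := (FractionalIdeal.absNorm I : ℝ)
  set d : ℝ := |(NumberField.discr F : ℝ)|
  have hN : 0 < N := Rat.cast_pos.mpr <|
    (FractionalIdeal.absNorm_nonneg I).lt_of_ne' (FractionalIdeal.absNorm_eq_zero_iff.not.mpr hI)
  have hd : 0 < d := abs_pos.mpr (Int.cast_ne_zero.mpr (discr_ne_zero F))
  obtain ⟨x, hx, hx0⟩ : ∃ x ∈ I, x ≠ 0 := by
    simpa using mt FractionalIdeal.eq_zero_iff.mpr hI
  have h_inf : √N ≤ sInf {r : ℝ | ∃ x ∈ I, x ≠ 0 ∧ r = ∏ i, ‖σ i x‖} :=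
    le_csInf ⟨_, x, hx, hx0, rfl⟩ fun _ ⟨y, hy, hy0, hr⟩ ↦
      hr ▸ sqrt_absNorm_le_prod_norm hinj hpair hdistinct hy hy0
  have h_ratio : √N / √V = 2 ^ ((k : ℝ) / 2) / d ^ ((1 : ℝ) / 4) := by
    rw [hV, Real.sqrt_mul_two_zpow_neg_mul_sqrt hN.le hd.le]
    field_simp
  rw [ge_iff_le, ← h_ratio]
  gcongr

/-- Normalized product distance of an ideal lattice: for a totally complex number
field `F` of degree `2k` with discriminant `d_F`, relative canonical embedding
`ψ = (σ₁,…,σ_k)`, and a nonzero fractional ideal `I`,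
`Np(ψ(I)) = p(ψ(I))/V(ψ(I))^{1/2} ≥ 2^{k/2}/|d_F|^{1/4}`. -/
theorem normalized_product_distance_ideal_lattice {F : Type*} [Field F] [NumberField F]
    {k : ℕ} (hk : 0 < k) (hdeg : Module.finrank ℚ F = 2 * k)
    (σ : Fin k → (F →+* ℂ))
    (hinj : Function.Injective σ)
    (hpair : ∀ φ : F →+* ℂ, (∃ i, φ = σ i) ∨ (∃ i, φ = (starRingEnd ℂ).comp (σ i)))
    (hdistinct : ∀ i j, σ i ≠ (starRingEnd ℂ).comp (σ j))
    (I : FractionalIdeal (𝓞 F)⁰ F) (hI : I ≠ 0)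
    (V : ℝ)
    -- the covolume of the ideal lattice `ψ(I) ⊂ ℂ^k ≅ ℝ^{2k}`
    (hV : V = (FractionalIdeal.absNorm I : ℝ) * 2 ^ (-(k : ℤ)) *
      Real.sqrt |(NumberField.discr F : ℝ)|) :
    sInf {r : ℝ | ∃ x ∈ I, x ≠ 0 ∧ r = ∏ i, ‖σ i x‖} / Real.sqrt V ≥
      2 ^ ((k : ℝ) / 2) / |(NumberField.discr F : ℝ)| ^ ((1 : ℝ) / 4) :=
  normalized_product_distance_ideal_lattice_general σ hinj hpair hdistinct I hI V hV
end

section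
/- Let 𝒟 be a division algebra of degree n over a totally complex number field F of degree 2k, Γ a ℤ-order in 𝒟, ψ the multi-block embedding ψ(a) = (α₁(φ(a));…;α_k(φ(a))) ∈ M_{nk×n}(ℂ), and Γ^∨ = {x ∈ 𝒟 : tr_{𝒟/ℚ}(xΓ) ⊆ ℤ} the codifferent. Then the dual of the matrix lattice ψ(Γ) with respect to the inner product ⟨X,Y⟩ = Re Tr(X†Y) equals 2·ψ(Γ^∨)^h, where for a block matrix X = (X₁;…;X_k), X^h = (X₁†;…;X_k†). -/
/-!
If `Y` pairs integrally with `ψ(Γ)` and `Γ` spans `D` over `ℚ`, then `a ↦ ⟨Y, ψ a⟩` is a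
`ℚ`-valued `ℚ`-linear functional on `D`; nondegeneracy of the trace form writes it as
`a ↦ tr(x a)`, and integrality on `Γ` puts `x` in the codifferent. By the trace identity,
`tr(x a) = ⟨2 ψ(x)^h, ψ(a)⟩`, so `Y` and `2 ψ(x)^h` pair equally with `ψ(D)`, which spans the
whole real space; positive definiteness of `⟨·,·⟩` makes them equal. The reverse inclusion is the
trace identity alone.
-/

open Matrix

/-- Real inner product `⟨X,Y⟩ = Re Tr(X†Y)` on block matrices `M_{nk×n}(ℂ)`,
represented as `k`-tuples of `n×n` blocks. -/
noncomputable def blockInner {n k : ℕ} (X Y : Fin k → Matrix (Fin n) (Fin n) ℂ) : ℝ :=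
  (∑ i, Matrix.trace ((X i)ᴴ * Y i)).re

section BlockInner

variable {n k : ℕ}

noncomputable def blockInnerₗ (X : Fin k → Matrix (Fin n) (Fin n) ℂ) :
    (Fin k → Matrix (Fin n) (Fin n) ℂ) →ₗ[ℝ] ℝ where
  toFun := blockInner X
  map_add' Y Z := by
    simp only [blockInner, Pi.add_apply, Matrix.mul_add, trace_add, Finset.sum_add_distrib,
      Complex.add_re]
  map_smul' r Y := by
    simp [blockInner, Complex.real_smul, Finset.mul_sum]

@[simp]
theorem blockInnerₗ_apply (X Y : Fin k → Matrix (Fin n) (Fin n) ℂ) :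
    blockInnerₗ X Y = blockInner X Y :=
  rfl

theorem blockInner_sub_left (X X' Y : Fin k → Matrix (Fin n) (Fin n) ℂ) :
    blockInner (X - X') Y = blockInner X Y - blockInner X' Y := by
  simp only [blockInner, Pi.sub_apply, conjTranspose_sub, Matrix.sub_mul, trace_sub,
    Finset.sum_sub_distrib, Complex.sub_re]

theorem blockInner_ofReal_smul_conjTranspose (r : ℝ) (X Y : Fin k → Matrix (Fin n) (Fin n) ℂ) :
    blockInner (fun i => (r : ℂ) • (X i)ᴴ) Y = r * (∑ i, trace (X i * Y i)).re := by
  simp [blockInner, conjTranspose_smul, trace_smul, Finset.mul_sum]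

open scoped ComplexOrder in
theorem blockInner_self_eq_zero_iff {X : Fin k → Matrix (Fin n) (Fin n) ℂ} :
    blockInner X X = 0 ↔ X = 0 := by
  refine ⟨fun h => ?_, fun h => by simp [h, blockInner]⟩
  have hnonneg : ∀ i ∈ Finset.univ, 0 ≤ trace ((X i)ᴴ * X i) :=
    fun i _ => (posSemidef_conjTranspose_mul_self (X i)).trace_nonneg
  -- a nonnegative complex number is real, so its vanishing real part forces it to vanish
  have hsum : ∑ i, trace ((X i)ᴴ * X i) = 0 := by
    obtain ⟨-, him⟩ := Complex.nonneg_iff.mp (Finset.sum_nonneg hnonneg)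
    exact Complex.ext h him.symm
  funext i
  exact trace_conjTranspose_mul_self_eq_zero_iff.mp
    ((Finset.sum_eq_zero_iff_of_nonneg hnonneg).mp hsum i (Finset.mem_univ i))

theorem eq_of_forall_blockInner_eq {S : Set (Fin k → Matrix (Fin n) (Fin n) ℂ)}
    (hS : Submodule.span ℝ S = ⊤) {X X' : Fin k → Matrix (Fin n) (Fin n) ℂ}
    (h : ∀ W ∈ S, blockInner X W = blockInner X' W) : X = X' := by
  have hzero : blockInnerₗ (X - X') = 0 :=
    LinearMap.ext_on hS fun W hW => by
      simp [blockInner_sub_left, h W hW]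
  rw [← sub_eq_zero, ← blockInner_self_eq_zero_iff]
  exact LinearMap.congr_fun hzero (X - X')

end BlockInner

theorem LinearMap.exists_dual_algebraMap_eq {K L V : Type*} [Field K] [Ring L] [Nontrivial L]
    [Algebra K L] [AddCommGroup V] [Module K V] (f : V →ₗ[K] L) {s : Set V}
    (hs : Submodule.span K s = ⊤) (hf : ∀ v ∈ s, f v ∈ Set.range (algebraMap K L)) :
    ∃ ℓ : Module.Dual K V, ∀ v, algebraMap K L (ℓ v) = f v := by
  let A := Algebra.linearMap K L
  have hA : Function.Injective A := (algebraMap K L).injective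
  have hrange : LinearMap.range f ≤ LinearMap.range A := by
    rw [LinearMap.range_eq_map, ← hs, Submodule.map_span, Submodule.span_le]
    rintro _ ⟨v, hv, rfl⟩
    exact hf v hv
  exact ⟨(LinearEquiv.ofInjective A hA).symm.toLinearMap ∘ₗ
      f.codRestrict (LinearMap.range A) fun v => hrange (LinearMap.mem_range_self f v),
    fun v => LinearEquiv.ofInjective_symm_apply A (h := hA) _⟩

theorem exists_forall_map_mul_eq_of_separating {K A : Type*} [Field K] [Ring A] [Algebra K A]
    [FiniteDimensional K A] (t : Module.Dual K A) (ht : ∀ x : A, x ≠ 0 → ∃ y, t (x * y) ≠ 0)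
    (ℓ : Module.Dual K A) : ∃ x : A, ∀ a, t (x * a) = ℓ a := by
  let B : LinearMap.BilinForm K A := (LinearMap.mul K A).compr₂ t
  have hB : B.Nondegenerate := by
    refine LinearMap.BilinForm.Nondegenerate.ofSeparatingLeft fun x hx => ?_
    by_contra hx0
    obtain ⟨y, hy⟩ := ht x hx0
    exact hy (hx y)
  exact ⟨(B.toDual hB).symm ℓ, fun a =>
    LinearMap.BilinForm.apply_toDual_symm_apply (hB := hB) ℓ a⟩

theorem dual_matrix_lattice_eq_codifferent_general {n k : ℕ}
    {D : Type*} [DivisionRing D] [Algebra ℚ D]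
    [FiniteDimensional ℚ D]
    -- the multi-block embedding `ψ(a) = (α₁(φ(a));…;α_k(φ(a)))`
    (ψ : D →ₗ[ℚ] (Fin k → Matrix (Fin n) (Fin n) ℂ))
    (hψspan : Submodule.span ℝ (Set.range ψ) = ⊤)
    -- the reduced trace `tr_{D/ℚ}` and its key identity
    (tr : D →ₗ[ℚ] ℚ)
    (htr : ∀ x y : D, ((tr (x * y) : ℚ) : ℝ) = 2 * (∑ i, Matrix.trace (ψ x i * ψ y i)).re)
    (htrnd : ∀ x : D, x ≠ 0 → ∃ y : D, tr (x * y) ≠ 0)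
    -- `Γ` is a `ℤ`-order in `D`
    (Γ : Submodule ℤ D)
    (hΓspan : Submodule.span ℚ (Γ : Set D) = ⊤)
    -- `Γ^∨` is the codifferent
    (codiff : Set D)
    (hcodiff : codiff = {x : D | ∀ γ ∈ Γ, ∃ m : ℤ, tr (x * γ) = m}) :
    {Y : Fin k → Matrix (Fin n) (Fin n) ℂ | ∀ a ∈ Γ, ∃ m : ℤ, blockInner Y (ψ a) = m} =
      {Y | ∃ x ∈ codiff, Y = fun i => (2 : ℂ) • (ψ x i)ᴴ} := by
  have hpair : ∀ x a : D, blockInner (fun i => (2 : ℂ) • (ψ x i)ᴴ) (ψ a) = tr (x * a) := by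
    intro x a
    rw [htr]
    exact_mod_cast blockInner_ofReal_smul_conjTranspose 2 (ψ x) (ψ a)
  subst hcodiff
  ext Y
  constructor
  · intro hY
    obtain ⟨ℓ, hℓ⟩ := ((blockInnerₗ Y).restrictScalars ℚ ∘ₗ ψ).exists_dual_algebraMap_eq hΓspan
      fun a ha => by
        obtain ⟨m, hm⟩ := hY a ha
        exact ⟨m, by simpa using hm.symm⟩
    obtain ⟨x, hx⟩ := exists_forall_map_mul_eq_of_separating tr htrnd ℓ
    refine ⟨x, fun γ hγ => ?_, eq_of_forall_blockInner_eq hψspan ?_⟩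
    · obtain ⟨m, hm⟩ := hY γ hγ
      refine ⟨m, Rat.cast_injective (α := ℝ) ?_⟩
      simpa [hx, ← hm] using hℓ γ
    · rintro _ ⟨a, rfl⟩
      simpa [hpair, hx] using (hℓ a).symm
  · rintro ⟨x, hx, rfl⟩ a ha
    obtain ⟨m, hm⟩ := hx a ha
    exact ⟨m, by rw [hpair, hm, Rat.cast_intCast]⟩

/-- Dual of the matrix lattice `ψ(Γ)` of a `ℤ`-order `Γ` in a division algebra `D`
over ℚ (of dimension `2n²k`): with respect to `⟨X,Y⟩ = Re Tr(X†Y)` it equals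
`2·ψ(Γ^∨)^h`, where `Γ^∨` is the codifferent of the reduced trace form and
`X^h` takes blockwise conjugate transposes. -/
theorem dual_matrix_lattice_eq_codifferent {n k : ℕ} (hn : 0 < n) (hk : 0 < k)
    {D : Type*} [DivisionRing D] [Algebra ℚ D]
    [FiniteDimensional ℚ D] (hdim : Module.finrank ℚ D = 2 * n ^ 2 * k)
    -- the multi-block embedding `ψ(a) = (α₁(φ(a));…;α_k(φ(a)))`
    (ψ : D →ₗ[ℚ] (Fin k → Matrix (Fin n) (Fin n) ℂ))
    (hψinj : Function.Injective ψ)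
    (hψmul : ∀ x y : D, ∀ i, ψ (x * y) i = ψ x i * ψ y i)
    (hψspan : Submodule.span ℝ (Set.range ψ) = ⊤)
    -- the reduced trace `tr_{D/ℚ}` and its key identity
    (tr : D →ₗ[ℚ] ℚ)
    (htr : ∀ x y : D, ((tr (x * y) : ℚ) : ℝ) = 2 * (∑ i, Matrix.trace (ψ x i * ψ y i)).re)
    (htrnd : ∀ x : D, x ≠ 0 → ∃ y : D, tr (x * y) ≠ 0)
    -- `Γ` is a `ℤ`-order in `D`
    (Γ : Submodule ℤ D) (hΓfg : Γ.FG) (hΓone : (1 : D) ∈ Γ)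
    (hΓmul : ∀ a ∈ Γ, ∀ b ∈ Γ, a * b ∈ Γ)
    (hΓspan : Submodule.span ℚ (Γ : Set D) = ⊤)
    -- `Γ^∨` is the codifferent
    (codiff : Set D)
    (hcodiff : codiff = {x : D | ∀ γ ∈ Γ, ∃ m : ℤ, tr (x * γ) = m}) :
    {Y : Fin k → Matrix (Fin n) (Fin n) ℂ | ∀ a ∈ Γ, ∃ m : ℤ, blockInner Y (ψ a) = m} =
      {Y | ∃ x ∈ codiff, Y = fun i => (2 : ℂ) • (ψ x i)ᴴ} :=
  dual_matrix_lattice_eq_codifferent_general ψ hψspan tr htr htrnd Γ hΓspan codiff hcodiff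
end
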